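/- Multi-channel convolution structure: let z̄¹,…,z̄ᵐ ∈ ℝ^{C×n} be multi-channel signals and circ(z̄ⁱ) ∈ ℝ^{nC×n} the vertical stack of the circulant matrices of their channels. Then for α > 0, the matrix Ē = α(I + α Σᵢ circ(z̄ⁱ)circ(z̄ⁱ)ᵀ)⁻¹ ∈ ℝ^{nC×nC} is block circulant with each n×n block Ē_{c,c'} circulant, and for any z̄ ∈ ℝ^{C×n}, applying Ē to vec(z̄) equals vec(ē ⊛ z̄), where ē[c,c'] is the first column of Ē_{c,c'} and (ē ⊛ z̄)[c] = Σ_{c'} ē[c,c'] ⊛ z̄[c']. -/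
import Mathlib

open Matrix BigOperators

/-- The `nC × n` vertical stack of the circulant matrices of the channels of a
multi-channel signal `z̄ : Fin C → ZMod n → ℝ`. -/
def circStack {C n : ℕ} (z : Fin C → ZMod n → ℝ) :
    Matrix (Fin C × ZMod n) (ZMod n) ℝ :=
  Matrix.of fun ci j => z ci.1 (ci.2 - j)

/-- Block circulant with circulant blocks. -/
def IsBlockCirculant {C n : ℕ} (M : Matrix (Fin C × ZMod n) (Fin C × ZMod n) ℝ) : Prop :=
  ∃ b : Fin C → Fin C → ZMod n → ℝ,
    ∀ (c c' : Fin C) (i j : ZMod n), M (c, i) (c', j) = b c c' (i - j)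

/-- Simultaneous shift on the index. -/
def shiftEq {C n : ℕ} (k : ZMod n) : (Fin C × ZMod n) ≃ (Fin C × ZMod n) :=
  Equiv.prodCongr (Equiv.refl (Fin C)) (Equiv.addRight k)

lemma shift_inv_base {C n m : ℕ} [NeZero n] (zbar : Fin m → Fin C → ZMod n → ℝ) (α : ℝ) (k : ZMod n) :
    ((1 : Matrix (Fin C × ZMod n) (Fin C × ZMod n) ℝ) +
        α • ∑ i : Fin m, (circStack (zbar i) * (circStack (zbar i))ᵀ :
          Matrix (Fin C × ZMod n) (Fin C × ZMod n) ℝ)).submatrix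
      (shiftEq k) (shiftEq k) =
    (1 : Matrix (Fin C × ZMod n) (Fin C × ZMod n) ℝ) +
        α • ∑ i : Fin m, circStack (zbar i) * (circStack (zbar i))ᵀ := by
  ext ⟨c, i⟩ ⟨c', j⟩
  simp only [Matrix.submatrix_apply, Matrix.add_apply, Matrix.smul_apply,
    Matrix.sum_apply, Matrix.mul_apply, Matrix.transpose_apply, circStack,
    Matrix.one_apply, Matrix.of_apply, shiftEq, Equiv.prodCongr_apply,
    Equiv.coe_refl, Prod.map, Equiv.coe_addRight, id_eq]
  congr 1
  · simp only [Prod.mk.injEq, add_left_inj]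
  · congr 1
    refine Finset.sum_congr rfl fun l _ => ?_
    exact (Fintype.sum_equiv (Equiv.addRight k)
      (fun t => zbar l c (i - t) * zbar l c' (j - t)) _
      fun t => by simp [add_sub_add_right_eq_sub]).symm

/-- Multi-channel convolution structure: `Ē = α (I + α ∑ᵢ circ(z̄ⁱ)circ(z̄ⁱ)ᵀ)⁻¹`
is block circulant with circulant blocks, and applying `Ē` to `vec(z̄)` is the
multi-channel circular convolution with the kernel formed by the first columns of
its blocks. -/
theorem multichannel_expansion_conv {C n m : ℕ} [NeZero n]
    (zbar : Fin m → Fin C → ZMod n → ℝ) (α : ℝ) (hα : 0 < α) :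
    let Ebar : Matrix (Fin C × ZMod n) (Fin C × ZMod n) ℝ :=
      α • ((1 : Matrix (Fin C × ZMod n) (Fin C × ZMod n) ℝ) +
        α • ∑ i : Fin m, circStack (zbar i) * (circStack (zbar i))ᵀ)⁻¹
    IsBlockCirculant Ebar ∧
    ∀ (z : Fin C → ZMod n → ℝ) (c : Fin C) (i : ZMod n),
      (Ebar *ᵥ fun p : Fin C × ZMod n => z p.1 p.2) (c, i) =
        ∑ c' : Fin C, ∑ j : ZMod n, Ebar (c, i - j) (c', 0) * z c' j := by
  intro Ebar
  have hshift : ∀ (k : ZMod n) (c c' : Fin C) (i j : ZMod n),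
      Ebar (c, i + k) (c', j + k) = Ebar (c, i) (c', j) := by
    intro k c c' i j
    have h := shift_inv_base zbar α k
    have h2 : Ebar.submatrix (shiftEq k) (shiftEq k) = Ebar := by
      have hE : Ebar = α • ((1 : Matrix (Fin C × ZMod n) (Fin C × ZMod n) ℝ) +
          α • ∑ i : Fin m, circStack (zbar i) * (circStack (zbar i))ᵀ)⁻¹ := rfl
      have h3 := congrArg (fun M : Matrix (Fin C × ZMod n) (Fin C × ZMod n) ℝ => α • M⁻¹) h
      simp only [Matrix.inv_submatrix_equiv] at h3
      rw [hE]
      ext p q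
      have h4 := congrFun (congrFun h3 p) q
      simpa [Matrix.submatrix_apply, Matrix.smul_apply] using h4
    calc Ebar (c, i + k) (c', j + k)
        = Ebar.submatrix (shiftEq k) (shiftEq k) (c, i) (c', j) := rfl
      _ = Ebar (c, i) (c', j) := by rw [h2]
  have key : ∀ (c c' : Fin C) (i j : ZMod n),
      Ebar (c, i) (c', j) = Ebar (c, i - j) (c', 0) := by
    intro c c' i j
    have := hshift j c c' (i - j) 0
    rw [sub_add_cancel, zero_add] at this
    exact this
  constructor
  · exact ⟨fun c c' d => Ebar (c, d) (c', 0), fun c c' i j => key c c' i j⟩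
  · intro z c i
    rw [Matrix.mulVec, dotProduct, Fintype.sum_prod_type]
    exact Finset.sum_congr rfl fun c' _ => Finset.sum_congr rfl fun j _ => by
      rw [key c c' i j]
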